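/- Let R be a random variable on ℕ with P(R = r) = (1 - γ(t+r-1)) ∏_{k=1}^{r-1} γ(t+k-1), where γ is L-periodic with values in (0,1). Then the expected value satisfies E[R] = (L + ∑_{r=1}^{L} r·d(r)) / (∑_{r=1}^{L} d(r)) − L, where d(r) = (1 - γ(t+r-1)) ∏_{k=1}^{r-1} γ(t+k-1). -/

import Mathlib

/-!
Write `D n = d (n + 1)`, so that `E[R] = ∑ (n + 1) * D n`, and let `p` be the product of `γ` over
one period. Periodicity of `γ` makes `D` geometric along residue classes mod `L`:
`D (n + L) = p * D n`. Splitting off the first `L` terms of `∑ D n` and of `∑ (n + 1) * D n` gives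
linear equations for both sums (a partial-sum bound of the same kind shows they converge). Since
`∑_{i<L} D i` telescopes to `1 - p`, the first equation gives `∑ D n = 1`, and the second then
yields the formula.
-/

open MeasureTheory

open Finset

open scoped ENNReal

section PeriodicRecurrence

variable {b c : ℕ → ℝ} {L : ℕ} {p : ℝ}

theorem summable_of_add_period_le (hb : ∀ n, 0 ≤ b n) (hc0 : ∀ n, 0 ≤ c n) (hc : Summable c)
    (hp : p < 1) (hrec : ∀ n, b (n + L) ≤ p * b n + c n) : Summable b := by
  refine summable_of_sum_range_le hb (c := (∑ i ∈ range L, b i + ∑' n, c n) / (1 - p))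
    fun N ↦ ?_
  have hshift : ∑ i ∈ range (L + N), b i
      ≤ ∑ i ∈ range L, b i + p * ∑ i ∈ range N, b i + ∑' n, c n :=
    calc ∑ i ∈ range (L + N), b i = ∑ i ∈ range L, b i + ∑ i ∈ range N, b (i + L) := by
          rw [sum_range_add]
          simp only [add_comm L]
      _ ≤ ∑ i ∈ range L, b i + (p * ∑ i ∈ range N, b i + ∑ i ∈ range N, c i) := by
          rw [mul_sum, ← sum_add_distrib]
          gcongr with i
          exact hrec i
      _ ≤ _ := by
          rw [← add_assoc]
          gcongr
          exact hc.sum_le_tsum _ fun i _ ↦ hc0 i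
  have hmono : ∑ i ∈ range N, b i ≤ ∑ i ∈ range (L + N), b i :=
    sum_le_sum_of_subset_of_nonneg (range_subset_range.mpr (Nat.le_add_left N L))
      fun i _ _ ↦ hb i
  rw [le_div_iff₀ (sub_pos.mpr hp)]
  linarith

theorem tsum_eq_of_add_period_eq (hb : Summable b) (hc : Summable c) (hp : p ≠ 1)
    (hrec : ∀ n, b (n + L) = p * b n + c n) :
    ∑' n, b n = (∑ i ∈ range L, b i + ∑' n, c n) / (1 - p) := by
  have htail : ∑' n, b (n + L) = p * ∑' n, b n + ∑' n, c n := by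
    rw [tsum_congr hrec, (hb.mul_left p).tsum_add hc, tsum_mul_left]
  have hsplit := hb.sum_add_tsum_nat_add L
  rw [htail] at hsplit
  rw [eq_div_iff (sub_ne_zero.mpr hp.symm)]
  linarith

end PeriodicRecurrence

section GeometricPeriodic

variable {f : ℕ → ℝ} {L : ℕ} {p : ℝ}

theorem summable_of_add_period_eq_mul (hf0 : ∀ n, 0 ≤ f n) (hp : p < 1)
    (hf : ∀ n, f (n + L) = p * f n) : Summable f :=
  summable_of_add_period_le (c := 0) (L := L) hf0 (fun _ ↦ le_rfl) summable_zero hp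
    fun n ↦ by simp [hf n]

theorem tsum_of_add_period_eq_mul (hf0 : ∀ n, 0 ≤ f n) (hp : p < 1)
    (hf : ∀ n, f (n + L) = p * f n) : ∑' n, f n = (∑ i ∈ range L, f i) / (1 - p) := by
  simpa using tsum_eq_of_add_period_eq (c := 0) (L := L)
    (summable_of_add_period_eq_mul hf0 hp hf) summable_zero hp.ne fun n ↦ by simp [hf n]

theorem succ_mul_add_period_eq (hf : ∀ n, f (n + L) = p * f n) (n : ℕ) :
    (((n + L : ℕ) : ℝ) + 1) * f (n + L) = p * (((n : ℝ) + 1) * f n) + p * L * f n := by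
  rw [hf]
  push_cast
  ring

theorem summable_succ_mul_of_add_period_eq_mul (hf0 : ∀ n, 0 ≤ f n) (hp0 : 0 ≤ p) (hp : p < 1)
    (hf : ∀ n, f (n + L) = p * f n) : Summable fun n : ℕ ↦ ((n : ℝ) + 1) * f n :=
  summable_of_add_period_le (fun n ↦ by have := hf0 n; positivity)
    (fun n ↦ by have := hf0 n; positivity) ((summable_of_add_period_eq_mul hf0 hp hf).mul_left _)
    hp fun n ↦ (succ_mul_add_period_eq hf n).le

theorem tsum_succ_mul_of_add_period_eq_mul (hf0 : ∀ n, 0 ≤ f n) (hp0 : 0 ≤ p) (hp : p < 1)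
    (hf : ∀ n, f (n + L) = p * f n) :
    ∑' n : ℕ, ((n : ℝ) + 1) * f n
      = (∑ i ∈ range L, ((i : ℝ) + 1) * f i + p * L * ∑' n, f n) / (1 - p) := by
  rw [tsum_eq_of_add_period_eq (summable_succ_mul_of_add_period_eq_mul hf0 hp0 hp hf)
    ((summable_of_add_period_eq_mul hf0 hp hf).mul_left _) hp.ne (succ_mul_add_period_eq hf),
    tsum_mul_left]

end GeometricPeriodic

theorem Function.Periodic.prod_range_add {M : Type*} [CommMonoid M] {g : ℕ → M} {L : ℕ}
    (hg : Function.Periodic g L) (a : ℕ) : ∏ k ∈ range L, g (a + k) = ∏ k ∈ range L, g k := by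
  induction a with
  | zero => simp
  | succ a ih =>
    rw [← ih]
    rcases L with _ | m
    · simp
    · rw [prod_range_succ, prod_range_succ', add_zero, ← hg a, add_right_comm]
      simp only [add_assoc, add_comm 1]

/-- `dwellProb g n` is the paper's `d (n + 1)` for `g = γ (t + ·)`. -/
def dwellProb {R : Type*} [CommRing R] (g : ℕ → R) (n : ℕ) : R :=
  (1 - g n) * ∏ k ∈ range n, g k

section DwellProb

variable {R : Type*} [CommRing R] {g : ℕ → R}

theorem sum_range_dwellProb (g : ℕ → R) (n : ℕ) :
    ∑ i ∈ range n, dwellProb g i = 1 - ∏ k ∈ range n, g k := by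
  induction n with
  | zero => simp
  | succ n ih =>
    rw [sum_range_succ, ih, dwellProb, prod_range_succ]
    ring

theorem dwellProb_add_period {L : ℕ} (hg : Function.Periodic g L) (n : ℕ) :
    dwellProb g (n + L) = (∏ k ∈ range L, g k) * dwellProb g n := by
  rw [dwellProb, dwellProb, hg n, prod_range_add, hg.prod_range_add]
  ring

theorem dwellProb_nonneg [PartialOrder R] [IsOrderedRing R] (hg0 : ∀ n, 0 ≤ g n)
    (hg1 : ∀ n, g n ≤ 1) (n : ℕ) : 0 ≤ dwellProb g n :=
  mul_nonneg (sub_nonneg.mpr (hg1 n)) (prod_nonneg fun k _ ↦ hg0 k)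

end DwellProb

theorem integral_natCast_eq_tsum_succ_mul {Ω : Type*} [MeasurableSpace Ω] {μ : Measure Ω}
    {R : Ω → ℕ} (hR : Measurable R) {f : ℕ → ℝ} (hf0 : ∀ n, 0 ≤ f n)
    (hf : Summable fun n : ℕ ↦ ((n : ℝ) + 1) * f n)
    (hpmf : ∀ n, μ {ω | R ω = n + 1} = ENNReal.ofReal (f n)) :
    ∫ ω, (R ω : ℝ) ∂μ = ∑' n : ℕ, ((n : ℝ) + 1) * f n := by
  have hlin : ∫⁻ ω, (R ω : ℝ≥0∞) ∂μ = ∑' n : ℕ, (n : ℝ≥0∞) * μ {ω | R ω = n} := by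
    rw [← lintegral_map measurable_from_top hR, lintegral_countable']
    exact tsum_congr fun n ↦ by rw [Measure.map_apply hR (measurableSet_singleton n)]; rfl
  have hterm : ∀ n : ℕ, ((n + 1 : ℕ) : ℝ≥0∞) * μ {ω | R ω = n + 1}
      = ENNReal.ofReal (((n : ℝ) + 1) * f n) := fun n ↦ by
    rw [hpmf, ENNReal.ofReal_mul (by positivity), ← ENNReal.ofReal_natCast]
    push_cast
    rfl
  calc ∫ ω, (R ω : ℝ) ∂μ = (∫⁻ ω, (R ω : ℝ≥0∞) ∂μ).toReal := by
        simpa using integral_toReal (μ := μ) (f := fun ω ↦ (R ω : ℝ≥0∞))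
          (measurable_from_top.comp hR).aemeasurable (by simp)
    _ = (∑' n : ℕ, ENNReal.ofReal (((n : ℝ) + 1) * f n)).toReal := by
        rw [hlin, tsum_eq_zero_add' ENNReal.summable]
        simp only [Nat.cast_zero, zero_mul, zero_add, hterm]
    _ = ∑' n : ℕ, ((n : ℝ) + 1) * f n := by
        rw [← ENNReal.ofReal_tsum_of_nonneg (fun n ↦ by have := hf0 n; positivity) hf,
          ENNReal.toReal_ofReal (tsum_nonneg fun n ↦ by have := hf0 n; positivity)]

theorem stmt5_general {Ω : Type*} [MeasurableSpace Ω] (μ : Measure Ω)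
    (L t : ℕ) (γ : ℕ → ℝ)
    (hγ : ∀ n, 0 < γ n ∧ γ n < 1)
    (hper : ∀ s, γ (s + L) = γ s)
    (hprod : ∏ j ∈ Finset.range L, γ (1 + j) < 1)
    (R : Ω → ℕ) (hmeas : Measurable R)
    (d : ℕ → ℝ)
    (hd : ∀ r, d r = (1 - γ (t + r - 1)) * ∏ k ∈ Finset.range (r - 1), γ (t + k))
    (hpmf : ∀ r, 1 ≤ r → μ {ω | R ω = r} = ENNReal.ofReal (d r)) :
    ∫ ω, (R ω : ℝ) ∂μ
      = (L + ∑ r ∈ Finset.Icc 1 L, (r : ℝ) * d r) / (∑ r ∈ Finset.Icc 1 L, d r)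
          - L := by
  set g : ℕ → ℝ := fun k ↦ γ (t + k)
  have hg : Function.Periodic g L := fun s ↦ by simp only [g, ← add_assoc, hper]
  have hdg : ∀ n, d (n + 1) = dwellProb g n := fun n ↦ by simp [hd, dwellProb, g]
  set p := ∏ k ∈ range L, g k
  have hp0 : 0 ≤ p := prod_nonneg fun k _ ↦ (hγ _).1.le
  have hp1 : p < 1 :=
    calc p = ∏ k ∈ range L, γ k := Function.Periodic.prod_range_add hper t
      _ < 1 := (Function.Periodic.prod_range_add hper 1).symm.trans_lt hprod
  have hf0 : ∀ n, 0 ≤ dwellProb g n :=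
    dwellProb_nonneg (fun n ↦ (hγ _).1.le) fun n ↦ (hγ _).2.le
  have hf : ∀ n, dwellProb g (n + L) = p * dwellProb g n := dwellProb_add_period hg
  have hmass : ∑ i ∈ range L, dwellProb g i = 1 - p := sum_range_dwellProb g L
  have hIcc (F : ℕ → ℝ) : ∑ r ∈ Icc 1 L, F r = ∑ i ∈ range L, F (i + 1) := by
    rw [← Ico_add_one_right_eq_Icc, sum_Ico_eq_sum_range]
    exact sum_congr rfl fun i _ ↦ by rw [add_comm]
  rw [integral_natCast_eq_tsum_succ_mul hmeas hf0
    (summable_succ_mul_of_add_period_eq_mul hf0 hp0 hp1 hf)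
    (fun n ↦ by rw [hpmf (n + 1) n.succ_pos, hdg]),
    tsum_succ_mul_of_add_period_eq_mul hf0 hp0 hp1 hf, tsum_of_add_period_eq_mul hf0 hp1 hf,
    hIcc, hIcc]
  simp only [hdg, hmass]
  push_cast
  have h1p : 1 - p ≠ 0 := sub_ne_zero.mpr hp1.ne'
  field_simp
  ring

/-- Let R be a random variable on ℕ (the dwell time) with
P(R = r) = (1 - γ(t+r-1)) ∏_{k=1}^{r-1} γ(t+k-1) for r ≥ 1, where γ is an
L-periodic sequence with values in (0,1) and full-cycle product < 1. Then
E[R] = (L + ∑_{r=1}^{L} r·d(r)) / (∑_{r=1}^{L} d(r)) − L,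
where d(r) = (1 - γ(t+r-1)) ∏_{k=1}^{r-1} γ(t+k-1)
           = (1 - γ(t+(r-1))) ∏_{k ∈ range (r-1)} γ(t+k). -/
theorem stmt5 {Ω : Type*} [MeasurableSpace Ω] (μ : Measure Ω) [IsProbabilityMeasure μ]
    (L t : ℕ) (hL : 1 ≤ L) (γ : ℕ → ℝ)
    (hγ : ∀ n, 0 < γ n ∧ γ n < 1)
    (hper : ∀ s, γ (s + L) = γ s)
    (hprod : ∏ j ∈ Finset.range L, γ (1 + j) < 1)
    (R : Ω → ℕ) (hmeas : Measurable R)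
    (d : ℕ → ℝ)
    (hd : ∀ r, d r = (1 - γ (t + r - 1)) * ∏ k ∈ Finset.range (r - 1), γ (t + k))
    (hpmf : ∀ r, 1 ≤ r → μ {ω | R ω = r} = ENNReal.ofReal (d r))
    (hzero : μ {ω | R ω = 0} = 0) :
    ∫ ω, (R ω : ℝ) ∂μ
      = (L + ∑ r ∈ Finset.Icc 1 L, (r : ℝ) * d r) / (∑ r ∈ Finset.Icc 1 L, d r)
          - L :=
  stmt5_general μ L t γ hγ hper hprod R hmeas d hd hpmf
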